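/- Regularity after blow-up: for every solution a(t) of the dyadic system with a(0) ∈ ℓ² and a_j(0) ≥ 0, the Sobolev norm ‖a(t)‖_{H^s}² = Σ_j 2^{2sj} a_j(t)² is locally integrable on [0,∞) for every s < 5/6. -/

import Mathlib

/-!
An integrating factor shows that the modes stay nonnegative. Then the energy identity
`d/dt ∑_{j ≤ N} a_j² = 2 (f₀ a₀ - λ^N a_N² a_{N+1})` makes the energy grow at most exponentially,
and, integrated over `[t₁, t₂]`, bounds the flux `λ^N ∫ a_N² a_{N+1}` uniformly in `N`.
Integrating the equation of `a_{N+1}` and estimating `∫ a_{N+1} a_{N+2}` by Hölder against this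
flux gives, for `u_N = ∫ a_N²`, the recursion `λ^N u_N ≤ A + C λ^{(N+1)/2} u_{N+2}^{1/4}`.
Its scaling exponent is `2/3`: as `u_N` is bounded a priori, iterating the recursion yields
`u_N = O(λ^{-2N/3}) = O(2^{-5N/3})`, which is summable against `2^{2sN}` exactly when `s < 5/6`.
-/
open Real Set MeasureTheory Finset Filter

noncomputable def lam : ℝ := (2:ℝ) ^ ((5:ℝ)/2)

/-- Right-hand side of the dyadic system: `da_j/dt = λ^{j-1} a_{j-1}² − λ^j a_j a_{j+1} + f_j`
with `a_{-1}=0`, forcing `f_0 > 0`, `f_j = 0` for `j ≥ 1`. -/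
noncomputable def dyadicRHS (f0 : ℝ) (a : ℕ → ℝ) : ℕ → ℝ
  | 0 => -(a 0 * a 1) + f0
  | (j+1) => lam ^ j * (a j)^2 - lam ^ (j+1) * a (j+1) * a (j+2)

/-- A weak (= classical) solution of the dyadic system on `[0,∞)`: an `ℓ²`-valued
function whose components are differentiable and satisfy the ODEs. -/
def IsDyadicSolution (f0 : ℝ) (a : ℝ → ℕ → ℝ) : Prop :=
  (∀ t ∈ Ici (0:ℝ), Summable (fun j => (a t j)^2)) ∧
  (∀ j, ∀ t ∈ Ici (0:ℝ), HasDerivWithinAt (fun s => a s j) (dyadicRHS f0 (a t) j) (Ici 0) t)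

open Topology

lemma le_of_le_add_mul_rpow_of_le_mul_pow {q : ℕ → ℝ} {K G Θ : ℝ} (hK : 1 ≤ K) (hG : 1 ≤ G)
    (hΘ : 1 ≤ Θ) (hq : ∀ N, 0 ≤ q N) (hrec : ∀ N, q N ≤ K + K * q (N + 2) ^ (1 / 4 : ℝ))
    (hgrowth : ∀ N, q N ≤ G * Θ ^ N) (N : ℕ) : q N ≤ 16 * K ^ 4 := by
  set X : ℕ → ℕ → ℝ := fun N k => G * Θ ^ (N + 2 * k) with hXdef
  have hX : ∀ N k, 1 ≤ X N k := fun N k => one_le_mul_of_one_le_of_one_le hG (one_le_pow₀ hΘ)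
  have hc : (16 * K ^ 4) ^ (1 / 4 : ℝ) = 2 * K := by
    rw [show 16 * K ^ 4 = (2 * K) ^ (4 : ℝ) by norm_cast; ring,
      ← rpow_mul (by positivity)]
    norm_num
  -- after `k` steps the a priori bound only enters through its `4^k`-th root
  have hiter : ∀ k N, q N ≤ 16 * K ^ 4 * X N k ^ ((1 / 4 : ℝ) ^ k) := by
    intro k
    induction k with
    | zero =>
      intro N
      have h16 : 1 ≤ 16 * K ^ 4 := by nlinarith [one_le_pow₀ (n := 4) hK]
      simpa [hXdef] using (hgrowth N).trans (le_mul_of_one_le_left (by positivity) h16)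
    | succ k ih =>
      intro N
      have hshift : X (N + 2) k = X N (k + 1) := by simp only [hXdef]; ring_nf
      have hroot : q (N + 2) ^ (1 / 4 : ℝ) ≤ 2 * K * X N (k + 1) ^ ((1 / 4 : ℝ) ^ (k + 1)) :=
        calc q (N + 2) ^ (1 / 4 : ℝ)
            ≤ (16 * K ^ 4 * X (N + 2) k ^ ((1 / 4 : ℝ) ^ k)) ^ (1 / 4 : ℝ) :=
              rpow_le_rpow (hq _) (ih _) (by norm_num)
          _ = 2 * K * X N (k + 1) ^ ((1 / 4 : ℝ) ^ (k + 1)) := by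
              have hXk : 0 ≤ X (N + 2) k := by linarith [hX (N + 2) k]
              rw [mul_rpow (by positivity) (by positivity), hc, ← rpow_mul hXk, hshift,
                pow_succ]
      have hone : 1 ≤ X N (k + 1) ^ ((1 / 4 : ℝ) ^ (k + 1)) :=
        one_le_rpow (hX _ _) (by positivity)
      calc q N ≤ K + K * q (N + 2) ^ (1 / 4 : ℝ) := hrec N
        _ ≤ K + K * (2 * K * X N (k + 1) ^ ((1 / 4 : ℝ) ^ (k + 1))) := by gcongr
        _ ≤ 3 * K ^ 2 * X N (k + 1) ^ ((1 / 4 : ℝ) ^ (k + 1)) := by nlinarith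
        _ ≤ 16 * K ^ 4 * X N (k + 1) ^ ((1 / 4 : ℝ) ^ (k + 1)) := by
            gcongr
            · norm_num
            · nlinarith
  have hlim : Tendsto (fun k => X N k ^ ((1 / 4 : ℝ) ^ k)) atTop (𝓝 1) := by
    have hexp : ∀ k, X N k ^ ((1 / 4 : ℝ) ^ k) = exp ((log G + N * log Θ) * (1 / 4) ^ k
        + 2 * log Θ * (k * (1 / 4) ^ k)) := fun k => by
      rw [rpow_def_of_pos (by linarith [hX N k]), hXdef, log_mul (by positivity) (by positivity),
        log_pow]
      push_cast; ring_nf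
    have h0 := ((tendsto_pow_atTop_nhds_zero_of_lt_one (r := (1 / 4 : ℝ)) (by norm_num)
      (by norm_num)).const_mul (log G + N * log Θ)).add
      ((tendsto_self_mul_const_pow_of_lt_one (r := (1 / 4 : ℝ)) (by norm_num)
        (by norm_num)).const_mul (2 * log Θ))
    simp only [mul_zero, add_zero] at h0
    have h1 := (continuous_exp.tendsto 0).comp h0
    rw [exp_zero] at h1
    exact h1.congr fun k => (hexp k).symm
  exact ge_of_tendsto (by simpa using hlim.const_mul (16 * K ^ 4))
    (Eventually.of_forall fun k => hiter k N)

lemma exists_pow_mul_le_of_le_add_mul_rpow {u : ℕ → ℝ} {θ A C M : ℝ} (hθ : 1 ≤ θ) (hA : 0 ≤ A)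
    (hC : 0 ≤ C) (hu : ∀ N, 0 ≤ u N) (hM : ∀ N, u N ≤ M)
    (hrec : ∀ N, θ ^ (6 * N) * u N ≤ A + C * θ ^ (3 * N + 3) * u (N + 2) ^ (1 / 4 : ℝ)) :
    ∃ c, ∀ N, (θ ^ 4) ^ N * u N ≤ c := by
  -- the rescaling `q N = θ^{4N} u N` makes the recursion independent of `N`
  set q : ℕ → ℝ := fun N => (θ ^ 4) ^ N * u N with hqdef
  have hθ0 : 0 ≤ θ := by linarith
  have hq : ∀ N, 0 ≤ q N := fun N => mul_nonneg (by positivity) (hu N)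
  have hroot : ∀ N, q (N + 2) ^ (1 / 4 : ℝ) = θ ^ (N + 2) * u (N + 2) ^ (1 / 4 : ℝ) := fun N => by
    rw [hqdef, mul_rpow (by positivity) (hu _), ← pow_mul, mul_comm 4, pow_mul,
      show (1 / 4 : ℝ) = ((4 : ℕ) : ℝ)⁻¹ by norm_num, pow_rpow_inv_natCast (by positivity)
      (by norm_num)]
  set K := A + C * θ + 1
  have hK : 1 ≤ K := by nlinarith
  have hqrec : ∀ N, q N ≤ K + K * q (N + 2) ^ (1 / 4 : ℝ) := fun N => by
    have hpos : 0 < θ ^ (2 * N) := by positivity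
    have h1 : θ ^ (2 * N) * q N ≤ θ ^ (2 * N) * (A + C * θ * q (N + 2) ^ (1 / 4 : ℝ)) :=
      calc θ ^ (2 * N) * q N = θ ^ (6 * N) * u N := by rw [hqdef]; ring
        _ ≤ A + C * θ ^ (3 * N + 3) * u (N + 2) ^ (1 / 4 : ℝ) := hrec N
        _ ≤ θ ^ (2 * N) * A + C * θ ^ (3 * N + 3) * u (N + 2) ^ (1 / 4 : ℝ) := by
            gcongr; exact le_mul_of_one_le_left hA (one_le_pow₀ hθ)
        _ = θ ^ (2 * N) * (A + C * θ * q (N + 2) ^ (1 / 4 : ℝ)) := by rw [hroot]; ring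
    have h2 := le_of_mul_le_mul_left h1 hpos
    have h3 : 0 ≤ q (N + 2) ^ (1 / 4 : ℝ) := rpow_nonneg (hq _) _
    nlinarith
  have hM0 : 0 ≤ M := (hu 0).trans (hM 0)
  refine ⟨16 * K ^ 4, le_of_le_add_mul_rpow_of_le_mul_pow hK (G := M + 1) (by linarith)
    (one_le_pow₀ (n := 4) hθ) hq hqrec fun N => ?_⟩
  calc q N ≤ (θ ^ 4) ^ N * M := mul_le_mul_of_nonneg_left (hM N) (by positivity)
    _ ≤ (M + 1) * (θ ^ 4) ^ N := by nlinarith [pow_nonneg (pow_nonneg hθ0 4) N]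

lemma intervalIntegral_mul_le_sqrt_mul_sqrt {f g : ℝ → ℝ} {a b : ℝ} (hab : a ≤ b)
    (hf : ContinuousOn f (Icc a b)) (hg : ContinuousOn g (Icc a b))
    (hf0 : ∀ t ∈ Icc a b, 0 ≤ f t) (hg0 : ∀ t ∈ Icc a b, 0 ≤ g t) :
    ∫ t in a..b, f t * g t ≤ √(∫ t in a..b, f t ^ 2) * √(∫ t in a..b, g t ^ 2) := by
  have hmemLp : ∀ h : ℝ → ℝ, ContinuousOn h (Icc a b) →
      MemLp h (ENNReal.ofReal 2) (volume.restrict (Ioc a b)) := fun h hh => by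
    have hh' := hh.mono Ioc_subset_Icc_self
    rw [ENNReal.ofReal_ofNat,
      memLp_two_iff_integrable_sq (hh'.aestronglyMeasurable measurableSet_Ioc)]
    exact (hh.pow 2).integrableOn_Icc.mono_set Ioc_subset_Icc_self
  have hnonneg : ∀ h : ℝ → ℝ, (∀ t ∈ Icc a b, 0 ≤ h t) → 0 ≤ᵐ[volume.restrict (Ioc a b)] h :=
    fun h hh =>
      ae_restrict_of_forall_mem measurableSet_Ioc fun t ht => hh t (Ioc_subset_Icc_self ht)
  simp only [intervalIntegral.integral_of_le hab, sqrt_eq_rpow]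
  simpa using integral_mul_le_Lp_mul_Lq_of_nonneg Real.HolderConjugate.two_two (hnonneg f hf0)
    (hnonneg g hg0) (hmemLp f hf) (hmemLp g hg)

lemma intervalIntegral_mul_le_sqrt_mul_rpow {f g : ℝ → ℝ} {a b : ℝ} (hab : a ≤ b)
    (hf : ContinuousOn f (Icc a b)) (hg : ContinuousOn g (Icc a b))
    (hf0 : ∀ t ∈ Icc a b, 0 ≤ f t) (hg0 : ∀ t ∈ Icc a b, 0 ≤ g t) :
    ∫ t in a..b, f t * g t ≤
      √(∫ t in a..b, f t ^ 2 * g t) * ((∫ t in a..b, g t ^ 2) * (b - a)) ^ (1 / 4 : ℝ) := by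
  have hsqrt : ContinuousOn (fun t => √(g t)) (Icc a b) := hg.sqrt
  have hfg : ∫ t in a..b, f t * g t ≤ √(∫ t in a..b, f t ^ 2 * g t) * √(∫ t in a..b, g t) := by
    have h := intervalIntegral_mul_le_sqrt_mul_sqrt hab (hf.mul hsqrt) hsqrt
      (fun t ht => mul_nonneg (hf0 t ht) (sqrt_nonneg _)) fun t _ => sqrt_nonneg _
    have e1 : ∫ t in a..b, f t * √(g t) * √(g t) = ∫ t in a..b, f t * g t :=
      intervalIntegral.integral_congr fun t ht => by
        rw [uIcc_of_le hab] at ht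
        simp only [mul_assoc, mul_self_sqrt (hg0 t ht)]
    have e2 : ∫ t in a..b, (f t * √(g t)) ^ 2 = ∫ t in a..b, f t ^ 2 * g t :=
      intervalIntegral.integral_congr fun t ht => by
        rw [uIcc_of_le hab] at ht
        simp only [mul_pow, sq_sqrt (hg0 t ht)]
    have e3 : ∫ t in a..b, √(g t) ^ 2 = ∫ t in a..b, g t :=
      intervalIntegral.integral_congr fun t ht => by
        rw [uIcc_of_le hab] at ht
        simp only [sq_sqrt (hg0 t ht)]
    simp only [Pi.mul_apply] at h
    rwa [e1, e2, e3] at h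
  have hg1 : ∫ t in a..b, g t ≤ √(∫ t in a..b, g t ^ 2) * √(b - a) := by
    simpa [hab] using intervalIntegral_mul_le_sqrt_mul_sqrt hab hg continuousOn_const hg0
      fun _ _ => zero_le_one
  have hgsq : 0 ≤ ∫ t in a..b, g t ^ 2 :=
    intervalIntegral.integral_nonneg hab fun t _ => sq_nonneg _
  calc ∫ t in a..b, f t * g t ≤ √(∫ t in a..b, f t ^ 2 * g t) * √(∫ t in a..b, g t) := hfg
    _ ≤ √(∫ t in a..b, f t ^ 2 * g t) * √(√(∫ t in a..b, g t ^ 2) * √(b - a)) := by gcongr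
    _ = √(∫ t in a..b, f t ^ 2 * g t) * ((∫ t in a..b, g t ^ 2) * (b - a)) ^ (1 / 4 : ℝ) := by
      rw [← sqrt_mul hgsq]
      congr 1
      rw [sqrt_eq_rpow, sqrt_eq_rpow, ← rpow_mul (by positivity)]
      norm_num

lemma integrable_tsum_of_summable_integral {α : Type*} [MeasurableSpace α] {μ : Measure α}
    {F : ℕ → α → ℝ} (hF0 : ∀ i x, 0 ≤ F i x) (hF : ∀ i, Integrable (F i) μ)
    (hsum : Summable fun i => ∫ x, F i x ∂μ) : Integrable (fun x => ∑' i, F i x) μ := by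
  have htoReal : (fun x => ∑' i, F i x) = fun x => (∑' i, ENNReal.ofReal (F i x)).toReal :=
    funext fun x => by
      rw [ENNReal.tsum_toReal_eq fun _ => ENNReal.ofReal_ne_top]
      simp only [ENNReal.toReal_ofReal (hF0 _ x)]
  rw [htoReal]
  refine integrable_toReal_of_lintegral_ne_top
    (AEMeasurable.tsum fun i => (hF i).aemeasurable.ennreal_ofReal) ?_
  rw [lintegral_tsum fun i => (hF i).aemeasurable.ennreal_ofReal]
  simp_rw [← ofReal_integral_eq_lintegral_ofReal (hF _) (Eventually.of_forall (hF0 _))]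
  rw [← ENNReal.ofReal_tsum_of_nonneg (fun i => integral_nonneg (hF0 i)) hsum]
  exact ENNReal.ofReal_ne_top

lemma sq_le_of_forall_sum_range_sq_le {v : ℕ → ℝ} {B : ℝ}
    (h : ∀ N, ∑ j ∈ range (N + 1), v j ^ 2 ≤ B) (j : ℕ) : v j ^ 2 ≤ B :=
  (single_le_sum (f := fun i => v i ^ 2) (fun _ _ => sq_nonneg _) (self_mem_range_succ j)).trans
    (h j)

lemma nonneg_of_hasDerivAt_add_mul_nonneg {x x' g : ℝ → ℝ} {a b : ℝ} (hab : a ≤ b)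
    (hg : ContinuousOn g (Icc a b)) (hx : ContinuousOn x (Icc a b))
    (hx' : ∀ t ∈ Ioo a b, HasDerivAt x (x' t) t) (hineq : ∀ t ∈ Ioo a b, 0 ≤ x' t + g t * x t)
    (ha : 0 ≤ x a) : 0 ≤ x b := by
  set G : ℝ → ℝ := fun t => ∫ s in a..t, g s
  have hGc : ContinuousOn G (Icc a b) := by
    have h := intervalIntegral.continuousOn_primitive_interval (μ := volume) (a := a) (b := b)
      (f := g) (by rw [uIcc_of_le hab]; exact hg.integrableOn_Icc)
    rwa [uIcc_of_le hab] at h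
  have hG' : ∀ t ∈ Ioo a b, HasDerivAt G (g t) t := fun t ht =>
    intervalIntegral.integral_hasDerivAt_right
      ((hg.mono (Icc_subset_Icc_right ht.2.le)).intervalIntegrable_of_Icc ht.1.le)
      ((hg.mono Ioo_subset_Icc_self).stronglyMeasurableAtFilter isOpen_Ioo t ht)
      (hg.continuousAt (Icc_mem_nhds ht.1 ht.2))
  -- the integrating factor `exp G` turns `x' + g x ≥ 0` into monotonicity of `x * exp G`
  have hmono : MonotoneOn (fun t => x t * exp (G t)) (Icc a b) := by
    refine monotoneOn_of_hasDerivWithinAt_nonneg (convex_Icc a b) (hx.mul hGc.rexp)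
      (f' := fun t => x' t * exp (G t) + x t * (exp (G t) * g t))
      (fun t ht => ?_) fun t ht => ?_
    · rw [interior_Icc] at ht
      exact ((hx' t ht).mul (hG' t ht).exp).hasDerivWithinAt
    · rw [interior_Icc] at ht
      nlinarith [hineq t ht, exp_pos (G t)]
  have hb := hmono (left_mem_Icc.2 hab) (right_mem_Icc.2 hab) hab
  simp only [G, intervalIntegral.integral_same, exp_zero, mul_one] at hb
  exact (mul_nonneg_iff_of_pos_right (exp_pos _)).1 (ha.trans hb)

lemma lam_pos : 0 < lam := rpow_pos_of_pos two_pos _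

lemma sum_mul_dyadicRHS (f0 : ℝ) (v : ℕ → ℝ) (N : ℕ) :
    ∑ j ∈ range (N + 1), v j * dyadicRHS f0 v j = f0 * v 0 - lam ^ N * (v N ^ 2 * v (N + 1)) := by
  induction N with
  | zero => simp [dyadicRHS]; ring
  | succ n ih => rw [sum_range_succ, ih, dyadicRHS]; ring

lemma dyadicRHS_add_mul_nonneg {f0 : ℝ} (hf0 : 0 ≤ f0) (v : ℕ → ℝ) (j : ℕ) :
    0 ≤ dyadicRHS f0 v j + lam ^ j * v (j + 1) * v j := by
  cases j with
  | zero => simp [dyadicRHS]; linarith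
  | succ n =>
    simp only [dyadicRHS]
    nlinarith [mul_nonneg (pow_nonneg lam_pos.le n) (sq_nonneg (v n))]

namespace IsDyadicSolution

variable {f0 : ℝ} {a : ℝ → ℕ → ℝ} {t1 t2 B : ℝ}

lemma continuousOn (ha : IsDyadicSolution f0 a) (j : ℕ) :
    ContinuousOn (fun t => a t j) (Ici 0) := fun t ht => (ha.2 j t ht).continuousWithinAt

lemma hasDerivAt (ha : IsDyadicSolution f0 a) (j : ℕ) {t : ℝ} (ht : 0 < t) :
    HasDerivAt (fun s => a s j) (dyadicRHS f0 (a t) j) t :=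
  (ha.2 j t ht.le).hasDerivAt (Ici_mem_nhds ht)

lemma hasDerivWithinAt_sum_sq (ha : IsDyadicSolution f0 a) (N : ℕ) {t : ℝ} (ht : 0 ≤ t) :
    HasDerivWithinAt (fun s => ∑ j ∈ range (N + 1), a s j ^ 2)
      (2 * (f0 * a t 0 - lam ^ N * (a t N ^ 2 * a t (N + 1)))) (Ici 0) t := by
  have h := HasDerivWithinAt.fun_sum fun j (_ : j ∈ range (N + 1)) => (ha.2 j t ht).fun_pow 2
  refine h.congr_deriv ?_
  simp only [Nat.cast_ofNat, Nat.add_one_sub_one, pow_one, mul_assoc, ← mul_sum,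
    sum_mul_dyadicRHS]

lemma nonneg (ha : IsDyadicSolution f0 a) (hf0 : 0 ≤ f0) (h0 : ∀ j, 0 ≤ a 0 j) {t : ℝ}
    (ht : 0 ≤ t) (j : ℕ) : 0 ≤ a t j :=
  nonneg_of_hasDerivAt_add_mul_nonneg ht (g := fun s => lam ^ j * a s (j + 1))
    (continuousOn_const.mul ((ha.continuousOn (j + 1)).mono Icc_subset_Ici_self))
    ((ha.continuousOn j).mono Icc_subset_Ici_self) (fun s hs => ha.hasDerivAt j hs.1)
    (fun s _ => by simpa [mul_assoc] using dyadicRHS_add_mul_nonneg hf0 (a s) j) (h0 j)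

lemma sum_sq_le (ha : IsDyadicSolution f0 a) (hf0 : 0 ≤ f0) (h0 : ∀ j, 0 ≤ a 0 j) (N : ℕ)
    {t : ℝ} (ht : 0 ≤ t) :
    ∑ j ∈ range (N + 1), a t j ^ 2 ≤ (1 + ∑' j, a 0 j ^ 2) * exp (f0 * t) := by
  have hE0 : 1 + ∑ j ∈ range (N + 1), a 0 j ^ 2 ≤ 1 + ∑' j, a 0 j ^ 2 := by
    gcongr
    exact (ha.1 0 self_mem_Ici).sum_le_tsum _ fun j _ => sq_nonneg _
  have hgronwall := le_gronwallBound_of_liminf_deriv_right_le (K := f0) (ε := 0)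
    (f := fun s => 1 + ∑ j ∈ range (N + 1), a s j ^ 2)
    (f' := fun s => 2 * (f0 * a s 0 - lam ^ N * (a s N ^ 2 * a s (N + 1))))
    (continuousOn_const.add (continuousOn_finsetSum _ fun j _ =>
      ((ha.continuousOn j).mono Icc_subset_Ici_self).pow 2))
    (fun s hs _ hr => (((ha.hasDerivWithinAt_sum_sq N hs.1).const_add 1).mono
      (Ici_subset_Ici.2 hs.1)).liminf_right_slope_le hr)
    hE0 (fun s hs => ?_) t ⟨ht, le_rfl⟩
  · rw [gronwallBound_ε0, sub_zero] at hgronwall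
    linarith
  · have hflux : 0 ≤ lam ^ N * (a s N ^ 2 * a s (N + 1)) :=
      mul_nonneg (pow_nonneg lam_pos.le N)
        (mul_nonneg (sq_nonneg _) (ha.nonneg hf0 h0 hs.1 _))
    have ha0 : a s 0 ^ 2 ≤ ∑ j ∈ range (N + 1), a s j ^ 2 :=
      single_le_sum (f := fun j => a s j ^ 2) (fun j _ => sq_nonneg _) (by simp)
    nlinarith [sq_nonneg (a s 0 - 1)]

lemma continuousOn_Icc (ha : IsDyadicSolution f0 a) (ht1 : 0 ≤ t1) (h12 : t1 ≤ t2) (j : ℕ) :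
    ContinuousOn (fun t => a t j) (Icc t1 t2) :=
  (ha.continuousOn j).mono ((Icc_subset_Ici_iff h12).2 ht1)

lemma lam_pow_mul_integral_flux_le (ha : IsDyadicSolution f0 a) (hf0 : 0 ≤ f0) (ht1 : 0 ≤ t1)
    (h12 : t1 ≤ t2) (hB : ∀ t ∈ Icc t1 t2, ∀ N, ∑ j ∈ range (N + 1), a t j ^ 2 ≤ B) (N : ℕ) :
    lam ^ N * ∫ t in t1..t2, a t N ^ 2 * a t (N + 1) ≤ f0 * (√B * (t2 - t1)) + B / 2 := by
  have hc := ha.continuousOn_Icc ht1 h12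
  have hc0 := hc 0
  have hcN := hc N
  have hcN1 := hc (N + 1)
  have hii : ∀ f : ℝ → ℝ, ContinuousOn f (Icc t1 t2) → IntervalIntegrable f volume t1 t2 :=
    fun f hf => hf.intervalIntegrable_of_Icc h12
  have hFTC := intervalIntegral.integral_eq_sub_of_hasDerivAt_of_le h12
    (continuousOn_finsetSum _ fun j _ => (hc j).pow 2)
    (fun t ht => (ha.hasDerivWithinAt_sum_sq N (ht1.trans ht.1.le)).hasDerivAt
      (Ici_mem_nhds (ht1.trans_lt ht.1)))
    (hii _ (by fun_prop))
  rw [intervalIntegral.integral_const_mul, intervalIntegral.integral_sub (hii _ (by fun_prop))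
    (hii _ (by fun_prop)), intervalIntegral.integral_const_mul,
    intervalIntegral.integral_const_mul] at hFTC
  simp only [Pi.pow_apply] at hFTC
  have hint0 : ∫ t in t1..t2, a t 0 ≤ √B * (t2 - t1) := by
    calc ∫ t in t1..t2, a t 0 ≤ ∫ _ in t1..t2, √B :=
          intervalIntegral.integral_mono_on h12 (hii _ hc0) (hii _ continuousOn_const)
            fun t ht => (le_abs_self _).trans
              (abs_le_sqrt (sq_le_of_forall_sum_range_sq_le (hB t ht) 0))
      _ = √B * (t2 - t1) := by rw [intervalIntegral.integral_const, smul_eq_mul, mul_comm]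
  have hE1 := hB t1 (left_mem_Icc.2 h12) N
  have hE2 : 0 ≤ ∑ j ∈ range (N + 1), a t2 j ^ 2 := sum_nonneg fun j _ => sq_nonneg _
  nlinarith [mul_le_mul_of_nonneg_left hint0 hf0]

lemma lam_pow_mul_integral_sq_le (ha : IsDyadicSolution f0 a) (ht1 : 0 ≤ t1) (h12 : t1 ≤ t2)
    (hnonneg : ∀ t ∈ Icc t1 t2, ∀ j, 0 ≤ a t j)
    (hB : ∀ t ∈ Icc t1 t2, ∀ N, ∑ j ∈ range (N + 1), a t j ^ 2 ≤ B) (N : ℕ) :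
    lam ^ N * ∫ t in t1..t2, a t N ^ 2 ≤
      √B + lam ^ (N + 1) * ∫ t in t1..t2, a t (N + 1) * a t (N + 2) := by
  have hc := ha.continuousOn_Icc ht1 h12
  have hcN := hc N
  have hcN1 := hc (N + 1)
  have hcN2 := hc (N + 2)
  have hii : ∀ f : ℝ → ℝ, ContinuousOn f (Icc t1 t2) → IntervalIntegrable f volume t1 t2 :=
    fun f hf => hf.intervalIntegrable_of_Icc h12
  have hFTC := intervalIntegral.integral_eq_sub_of_hasDerivAt_of_le h12 hcN1
    (f' := fun t => lam ^ N * a t N ^ 2 - lam ^ (N + 1) * (a t (N + 1) * a t (N + 2)))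
    (fun t ht => (ha.hasDerivAt (N + 1) (ht1.trans_lt ht.1)).congr_deriv
      (by simp only [dyadicRHS]; ring))
    (hii _ (by fun_prop))
  rw [intervalIntegral.integral_sub (hii _ (by fun_prop)) (hii _ (by fun_prop)),
    intervalIntegral.integral_const_mul, intervalIntegral.integral_const_mul] at hFTC
  have h2 : a t2 (N + 1) ≤ √B := (le_abs_self _).trans
    (abs_le_sqrt (sq_le_of_forall_sum_range_sq_le (hB t2 (right_mem_Icc.2 h12)) _))
  have h1 := hnonneg t1 (left_mem_Icc.2 h12) (N + 1)
  linarith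

lemma exists_pow_mul_integral_sq_le (ha : IsDyadicSolution f0 a) (hf0 : 0 ≤ f0) (ht1 : 0 ≤ t1)
    (h12 : t1 ≤ t2) (hnonneg : ∀ t ∈ Icc t1 t2, ∀ j, 0 ≤ a t j)
    (hB : ∀ t ∈ Icc t1 t2, ∀ N, ∑ j ∈ range (N + 1), a t j ^ 2 ≤ B) :
    ∃ c, ∀ N, ((2 : ℝ) ^ (5 / 3 : ℝ)) ^ N * ∫ t in t1..t2, a t N ^ 2 ≤ c := by
  -- with `θ = λ^{1/6}` every exponent in the mode recursion is a natural number
  set θ : ℝ := (2 : ℝ) ^ (5 / 12 : ℝ)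
  have hθ_pow : ∀ n : ℕ, θ ^ n = (2 : ℝ) ^ (5 / 12 * n : ℝ) := fun n => by
    rw [← rpow_natCast, ← rpow_mul zero_le_two]
  have hlam : ∀ n : ℕ, lam ^ n = θ ^ (6 * n) := fun n => by
    rw [hθ_pow, lam, ← rpow_natCast, ← rpow_mul zero_le_two]; push_cast; ring_nf
  have hθ4 : θ ^ 4 = (2 : ℝ) ^ (5 / 3 : ℝ) := by rw [hθ_pow]; norm_num
  have hcont := ha.continuousOn_Icc ht1 h12
  set C0 := f0 * (√B * (t2 - t1)) + B / 2
  have hrec : ∀ N, θ ^ (6 * N) * ∫ t in t1..t2, a t N ^ 2 ≤ √B + √C0 * (t2 - t1) ^ (1 / 4 : ℝ) *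
      θ ^ (3 * N + 3) * (∫ t in t1..t2, a t (N + 2) ^ 2) ^ (1 / 4 : ℝ) := by
    intro N
    have hflux := ha.lam_pow_mul_integral_flux_le hf0 ht1 h12 hB (N + 1)
    have hholder := intervalIntegral_mul_le_sqrt_mul_rpow h12 (hcont (N + 1)) (hcont (N + 2))
      (fun t ht => hnonneg t ht _) fun t ht => hnonneg t ht _
    set I := ∫ t in t1..t2, a t (N + 1) * a t (N + 2)
    set F := ∫ t in t1..t2, a t (N + 1) ^ 2 * a t (N + 2)
    set u := ∫ t in t1..t2, a t (N + 2) ^ 2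
    have hu : 0 ≤ u := intervalIntegral.integral_nonneg h12 fun t _ => sq_nonneg _
    have hθ0 : 0 ≤ θ ^ (3 * N + 3) := by positivity
    have hsq : lam ^ (N + 1) = (θ ^ (3 * N + 3)) ^ 2 := by rw [hlam, ← pow_mul]; ring_nf
    have hF : θ ^ (3 * N + 3) * √F ≤ √C0 := by
      rw [← sqrt_sq hθ0, ← sqrt_mul (sq_nonneg _), ← hsq]
      exact sqrt_le_sqrt hflux
    rw [← hlam]
    refine (ha.lam_pow_mul_integral_sq_le ht1 h12 hnonneg hB N).trans (add_le_add_right ?_ _)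
    calc lam ^ (N + 1) * I ≤ lam ^ (N + 1) * (√F * (u * (t2 - t1)) ^ (1 / 4 : ℝ)) := by
          gcongr; exact pow_nonneg lam_pos.le _
      _ = θ ^ (3 * N + 3) * (θ ^ (3 * N + 3) * √F) *
            (u ^ (1 / 4 : ℝ) * (t2 - t1) ^ (1 / 4 : ℝ)) := by
          rw [hsq, mul_rpow hu (sub_nonneg.2 h12)]; ring
      _ ≤ θ ^ (3 * N + 3) * √C0 * (u ^ (1 / 4 : ℝ) * (t2 - t1) ^ (1 / 4 : ℝ)) := by gcongr
      _ = √C0 * (t2 - t1) ^ (1 / 4 : ℝ) * θ ^ (3 * N + 3) * u ^ (1 / 4 : ℝ) := by ring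
  have hM : ∀ N, ∫ t in t1..t2, a t N ^ 2 ≤ B * (t2 - t1) := fun N =>
    calc ∫ t in t1..t2, a t N ^ 2 ≤ ∫ _ in t1..t2, B :=
          intervalIntegral.integral_mono_on h12 (((hcont N).pow 2).intervalIntegrable_of_Icc h12)
            intervalIntegrable_const fun t ht => sq_le_of_forall_sum_range_sq_le (hB t ht) N
      _ = B * (t2 - t1) := by rw [intervalIntegral.integral_const, smul_eq_mul, mul_comm]
  obtain ⟨c, hc⟩ := exists_pow_mul_le_of_le_add_mul_rpow (one_le_rpow one_le_two (by norm_num))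
    (sqrt_nonneg _) (by positivity)
    (fun N => intervalIntegral.integral_nonneg h12 fun t _ => sq_nonneg _) hM hrec
  exact ⟨c, fun N => hθ4 ▸ hc N⟩

end IsDyadicSolution

theorem local_integrability (a : ℝ → ℕ → ℝ) (ha : IsDyadicSolution (lam ^ (-(1:ℝ)/3)) a)
    (h0 : ∀ j, 0 ≤ a 0 j) (s : ℝ) (hs : s < 5/6) :
    ∀ t1 t2 : ℝ, 0 ≤ t1 → t1 ≤ t2 →
      IntervalIntegrable (fun t => ∑' j : ℕ, (2:ℝ)^(2*s*(j:ℝ)) * (a t j)^2) volume t1 t2 := by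
  intro t1 t2 ht1 h12
  have hf0 : 0 ≤ lam ^ (-(1:ℝ)/3) := (rpow_pos_of_pos lam_pos _).le
  have hnonneg : ∀ t ∈ Icc t1 t2, ∀ j, 0 ≤ a t j := fun t ht => ha.nonneg hf0 h0 (ht1.trans ht.1)
  have hB : ∀ t ∈ Icc t1 t2, ∀ N, ∑ j ∈ range (N + 1), a t j ^ 2 ≤
      (1 + ∑' j, a 0 j ^ 2) * exp (lam ^ (-(1:ℝ)/3) * t2) := fun t ht N =>
    (ha.sum_sq_le hf0 h0 N (ht1.trans ht.1)).trans (by gcongr; exact ht.2)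
  obtain ⟨c, hc⟩ := ha.exists_pow_mul_integral_sq_le hf0 ht1 h12 hnonneg hB
  set ρ : ℝ := (2 : ℝ) ^ (2 * s - 5 / 3)
  have hweight : ∀ j : ℕ, (2 : ℝ) ^ (2 * s * j) = ρ ^ j * ((2 : ℝ) ^ (5 / 3 : ℝ)) ^ j := fun j => by
    rw [← mul_pow, ← rpow_add two_pos, ← rpow_natCast, ← rpow_mul zero_le_two]; ring_nf
  have hcont := ha.continuousOn_Icc ht1 h12
  rw [intervalIntegrable_iff_integrableOn_Ioc_of_le h12]
  refine integrable_tsum_of_summable_integral (fun j t => by positivity)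
    (fun j => (continuousOn_const.mul ((hcont j).pow 2)).integrableOn_Icc.mono_set
      Ioc_subset_Icc_self)
    (Summable.of_nonneg_of_le
      (fun j => setIntegral_nonneg measurableSet_Ioc fun t _ => by positivity) (fun j => ?_)
      ((summable_geometric_of_lt_one (r := ρ) (by positivity)
        (rpow_lt_one_of_one_lt_of_neg one_lt_two (by linarith))).mul_right c))
  rw [← intervalIntegral.integral_of_le h12, intervalIntegral.integral_const_mul, hweight,
    mul_assoc]
  exact mul_le_mul_of_nonneg_left (hc j) (by positivity)
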